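/- arXiv:1804.03062 — 2 statements merged into one kernel-verified Lean document; each statement's English description precedes it below -/
import Mathlib

section
/- Under the logistic models for Y given (X,W) and W given X, the derivative γ(x) := d/dx g_0(x) of the log odds of W given Y=0, X=x satisfies γ(x) = γx − βx·Δy(x) − βxw·P(Y=1|W=1,X=x), where Δy(x) = P(Y=1|W=1,X=x) − P(Y=1|W=0,X=x). -/
noncomputable def expit (t : ℝ) : ℝ := Real.exp t / (1 + Real.exp t)

/-- `P(Y=1 | X=x, W=w)` under the logistic model. -/
noncomputable def pY (β0 βx βw βxw x w : ℝ) : ℝ := expit (β0 + βx * x + βw * w + βxw * x * w)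

/-- `P(W=1 | X=x)` under the logistic model. -/
noncomputable def pW (γ0 γx x : ℝ) : ℝ := expit (γ0 + γx * x)

/-- joint conditional probability `P(Y=y, W=w | X=x)` induced by the two logistic models. -/
noncomputable def jnt (β0 βx βw βxw γ0 γx x : ℝ) (y w : Bool) : ℝ :=
  (if y then pY β0 βx βw βxw x (if w then 1 else 0)
   else 1 - pY β0 βx βw βxw x (if w then 1 else 0)) *
  (if w then pW γ0 γx x else 1 - pW γ0 γx x)

/-- `P(W=w | Y=y, X=x)` obtained via Bayes' theorem. -/
noncomputable def pWgYX (β0 βx βw βxw γ0 γx x : ℝ) (y w : Bool) : ℝ :=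
  jnt β0 βx βw βxw γ0 γx x y w /
    (jnt β0 βx βw βxw γ0 γx x y true + jnt β0 βx βw βxw γ0 γx x y false)

/-- marginal (over `W`) probability `P(Y=y | X=x)`. -/
noncomputable def pYgX (β0 βx βw βxw γ0 γx x : ℝ) (y : Bool) : ℝ :=
  jnt β0 βx βw βxw γ0 γx x y true + jnt β0 βx βw βxw γ0 γx x y false

/-- `g_y(x)`, the conditional log odds of `W` given `Y=y, X=x`. -/
noncomputable def g (β0 βx βw βxw γ0 γx : ℝ) (y : Bool) (x : ℝ) : ℝ :=
  Real.log (pWgYX β0 βx βw βxw γ0 γx x y true / pWgYX β0 βx βw βxw γ0 γx x y false)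

/-- the marginal log odds of `Y` given `X=x`. -/
noncomputable def margLogit (β0 βx βw βxw γ0 γx : ℝ) (x : ℝ) : ℝ :=
  Real.log (pYgX β0 βx βw βxw γ0 γx x true / pYgX β0 βx βw βxw γ0 γx x false)

/-- `β(x)`, the marginal log-odds effect of `X` on `Y`. -/
noncomputable def betaMarg (β0 βx βw βxw γ0 γx : ℝ) (x : ℝ) : ℝ :=
  deriv (margLogit β0 βx βw βxw γ0 γx) x

/-!
By Bayes' theorem the odds of `W` given `Y = 0, X = x` are the prior odds `e^(γ0 + γx x)` times
the likelihood ratio `(1 - pY x 1) / (1 - pY x 0)`. Since `log (1 - expit t) = -log (1 + e^t)` has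
derivative `-expit t`, the chain rule along the linear predictors `β0 + βx x` and
`β0 + βw + (βx + βxw) x` gives `γx - (βx + βxw) pY x 1 + βx pY x 0`.
-/

open Real

lemma one_sub_expit (t : ℝ) : 1 - expit t = (1 + exp t)⁻¹ := by
  unfold expit
  field_simp
  ring

lemma expit_pos (t : ℝ) : 0 < expit t := by
  unfold expit
  positivity

lemma one_sub_expit_pos (t : ℝ) : 0 < 1 - expit t := by
  rw [one_sub_expit]
  positivity

lemma log_expit_div_one_sub_expit (t : ℝ) : log (expit t / (1 - expit t)) = t := by
  rw [one_sub_expit, expit, div_inv_eq_mul, div_mul_cancel₀ _ (by positivity), log_exp]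

lemma hasDerivAt_log_one_sub_expit (t : ℝ) :
    HasDerivAt (fun s => log (1 - expit s)) (-expit t) t := by
  have h := (((hasDerivAt_exp t).const_add 1).log (by positivity)).neg
  simp only [one_sub_expit, log_inv]
  exact h

lemma pY_eq_expit (β0 βx βw βxw x w : ℝ) :
    pY β0 βx βw βxw x w = expit ((β0 + βw * w) + (βx + βxw * w) * x) := by
  unfold pY
  ring_nf

lemma hasDerivAt_log_one_sub_pY (β0 βx βw βxw x w : ℝ) :
    HasDerivAt (fun x => log (1 - pY β0 βx βw βxw x w))
      (-(βx + βxw * w) * pY β0 βx βw βxw x w) x := by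
  have hlin := ((hasDerivAt_id x).const_mul (βx + βxw * w)).const_add (β0 + βw * w)
  simp only [pY_eq_expit]
  exact ((hasDerivAt_log_one_sub_expit _).comp x hlin).congr_deriv (by simp only [id]; ring)

lemma jnt_pos (β0 βx βw βxw γ0 γx x : ℝ) (y w : Bool) :
    0 < jnt β0 βx βw βxw γ0 γx x y w := by
  unfold jnt
  apply mul_pos <;> split <;> first | exact expit_pos _ | exact one_sub_expit_pos _

lemma pWgYX_true_div_false (β0 βx βw βxw γ0 γx x : ℝ) (y : Bool) :
    pWgYX β0 βx βw βxw γ0 γx x y true / pWgYX β0 βx βw βxw γ0 γx x y false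
      = jnt β0 βx βw βxw γ0 γx x y true / jnt β0 βx βw βxw γ0 γx x y false :=
  div_div_div_cancel_right₀ (add_pos (jnt_pos ..) (jnt_pos ..)).ne' _ _

lemma g_false_eq (β0 βx βw βxw γ0 γx x : ℝ) :
    g β0 βx βw βxw γ0 γx false x
      = γ0 + γx * x + log (1 - pY β0 βx βw βxw x 1) - log (1 - pY β0 βx βw βxw x 0) := by
  have hY0 : 0 < 1 - pY β0 βx βw βxw x 0 := one_sub_expit_pos _
  have hY1 : 0 < 1 - pY β0 βx βw βxw x 1 := one_sub_expit_pos _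
  have hW0 : 0 < 1 - pW γ0 γx x := one_sub_expit_pos _
  have hW1 : 0 < pW γ0 γx x := expit_pos _
  have hodds :
      jnt β0 βx βw βxw γ0 γx x false true / jnt β0 βx βw βxw γ0 γx x false false
        = pW γ0 γx x / (1 - pW γ0 γx x)
            * ((1 - pY β0 βx βw βxw x 1) / (1 - pY β0 βx βw βxw x 0)) := by
    simp only [jnt, ite_true, ite_false, Bool.false_eq_true]
    field_simp
  rw [g, pWgYX_true_div_false, hodds, log_mul (div_pos hW1 hW0).ne' (div_pos hY1 hY0).ne',
    pW, log_expit_div_one_sub_expit, log_div hY1.ne' hY0.ne']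
  ring

/-- `γ(x) = d/dx g_0(x) = γx − βx·Δy(x) − βxw·P(Y=1|W=1,X=x)`,
where `Δy(x) = P(Y=1|W=1,X=x) − P(Y=1|W=0,X=x)`. -/
theorem deriv_g_zero (β0 βx βw βxw γ0 γx : ℝ) (x : ℝ) :
    deriv (g β0 βx βw βxw γ0 γx false) x
      = γx - βx * (pY β0 βx βw βxw x 1 - pY β0 βx βw βxw x 0)
          - βxw * pY β0 βx βw βxw x 1 := by
  have hlin := ((hasDerivAt_id x).const_mul γx).const_add γ0
  have h := (hlin.add (hasDerivAt_log_one_sub_pY β0 βx βw βxw x 1)).sub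
    (hasDerivAt_log_one_sub_pY β0 βx βw βxw x 0)
  rw [funext (g_false_eq β0 βx βw βxw γ0 γx)]
  refine h.deriv.trans ?_
  ring
end

section
/- If γx = 0 (W independent of X), βxw = 0, and βx ≥ 0, then the marginal effect β(x) satisfies 0 ≤ β(x) ≤ βx for all x; more generally, if γx = 0 and βx and βxw are both nonnegative, then β(x) ≥ 0 for all x (no effect reversal upon marginalization over W). -/
open Real Set

/-- `m' / (m (1 - m))` for the mixture `m = p a + (1 - p) b` of two logistic curves with values
`a`, `b` and log-odds slopes `s`, `r`, whose derivatives are `a (1 - a) s` and `b (1 - b) r`. -/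
noncomputable def mixtureLogOddsSlope (p a b s r : ℝ) : ℝ :=
  (p * (a * (1 - a) * s) + (1 - p) * (b * (1 - b) * r)) /
    ((p * a + (1 - p) * b) * (1 - (p * a + (1 - p) * b)))

section Mixture

variable {p a b : ℝ}

lemma mixture_mem_Icc (hp : p ∈ Icc 0 1) (ha : a ∈ Icc 0 1) (hb : b ∈ Icc 0 1) :
    p * a + (1 - p) * b ∈ Icc (0 : ℝ) 1 :=
  convex_Icc 0 1 ha hb hp.1 (sub_nonneg.2 hp.2) (add_sub_cancel p 1)

lemma mixture_mem_Ioo (hp : p ∈ Icc 0 1) (ha : a ∈ Ioo 0 1) (hb : b ∈ Ioo 0 1) :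
    p * a + (1 - p) * b ∈ Ioo (0 : ℝ) 1 :=
  convex_Ioo 0 1 ha hb hp.1 (sub_nonneg.2 hp.2) (add_sub_cancel p 1)

lemma mixture_mul_one_sub_mixture (p a b : ℝ) :
    (p * a + (1 - p) * b) * (1 - (p * a + (1 - p) * b)) =
      p * (a * (1 - a)) + (1 - p) * (b * (1 - b)) + p * (1 - p) * (a - b) ^ 2 := by
  ring

lemma mixtureLogOddsSlope_nonneg (hp : p ∈ Icc 0 1) (ha : a ∈ Icc 0 1) (hb : b ∈ Icc 0 1)
    {s r : ℝ} (hs : 0 ≤ s) (hr : 0 ≤ r) : 0 ≤ mixtureLogOddsSlope p a b s r := by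
  have hvar {c : ℝ} (hc : c ∈ Icc (0 : ℝ) 1) : 0 ≤ c * (1 - c) :=
    mul_nonneg hc.1 (sub_nonneg.2 hc.2)
  exact div_nonneg
    (add_nonneg (mul_nonneg hp.1 (mul_nonneg (hvar ha) hs))
      (mul_nonneg (sub_nonneg.2 hp.2) (mul_nonneg (hvar hb) hr)))
    (hvar (mixture_mem_Icc hp ha hb))

lemma mixtureLogOddsSlope_le (hp : p ∈ Icc 0 1) (ha : a ∈ Ioo 0 1) (hb : b ∈ Ioo 0 1)
    {s : ℝ} (hs : 0 ≤ s) : mixtureLogOddsSlope p a b s s ≤ s := by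
  obtain ⟨hm0, hm1⟩ := mixture_mem_Ioo hp ha hb
  have hvar : 0 ≤ p * (1 - p) * (a - b) ^ 2 :=
    mul_nonneg (mul_nonneg hp.1 (sub_nonneg.2 hp.2)) (sq_nonneg _)
  rw [mixtureLogOddsSlope, div_le_iff₀ (mul_pos hm0 (sub_pos.2 hm1)),
    mixture_mul_one_sub_mixture]
  nlinarith [mul_nonneg hs hvar]

end Mixture

lemma HasDerivAt.log_div_one_sub {f : ℝ → ℝ} {f' x : ℝ} (hf : HasDerivAt f f' x)
    (h0 : 0 < f x) (h1 : f x < 1) :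
    HasDerivAt (fun t => Real.log (f t / (1 - f t))) (f' / (f x * (1 - f x))) x := by
  have h1' : 1 - f x ≠ 0 := (sub_pos.2 h1).ne'
  convert (hf.fun_div (hf.const_sub 1) h1').log (div_pos h0 (sub_pos.2 h1)).ne' using 1
  field_simp
  ring

lemma expit_eq_sigmoid : expit = sigmoid := by
  funext t
  rw [expit, sigmoid_def, exp_neg]
  field_simp
  ring

lemma expit_mem_Ioo (t : ℝ) : expit t ∈ Ioo 0 1 := by
  rw [expit_eq_sigmoid]
  exact ⟨sigmoid_pos t, sigmoid_lt_one t⟩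

lemma hasDerivAt_pY (β0 βx βw βxw x w : ℝ) :
    HasDerivAt (fun x => pY β0 βx βw βxw x w)
      (pY β0 βx βw βxw x w * (1 - pY β0 βx βw βxw x w) * (βx + βxw * w)) x := by
  have hlin : HasDerivAt (fun x => β0 + βx * x + βw * w + βxw * x * w) (βx + βxw * w) x := by
    refine ((((hasDerivAt_id' x).const_mul βx).const_add β0).add_const (βw * w)).fun_add
      (((hasDerivAt_id' x).const_mul βxw).mul_const w) |>.congr_deriv ?_
    ring
  simp only [pY, expit_eq_sigmoid]
  exact (hasDerivAt_sigmoid _).comp x hlin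

lemma pYgX_true (β0 βx βw βxw γ0 γx x : ℝ) :
    pYgX β0 βx βw βxw γ0 γx x true =
      pW γ0 γx x * pY β0 βx βw βxw x 1 + (1 - pW γ0 γx x) * pY β0 βx βw βxw x 0 := by
  simp only [pYgX, jnt, if_true, Bool.false_eq_true, if_false]
  ring

lemma pYgX_false (β0 βx βw βxw γ0 γx x : ℝ) :
    pYgX β0 βx βw βxw γ0 γx x false = 1 - pYgX β0 βx βw βxw γ0 γx x true := by
  simp only [pYgX, jnt, if_true, Bool.false_eq_true, if_false]
  ring

lemma betaMarg_eq_mixtureLogOddsSlope (β0 βx βw βxw γ0 x : ℝ) :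
    betaMarg β0 βx βw βxw γ0 0 x =
      mixtureLogOddsSlope (expit γ0) (pY β0 βx βw βxw x 1) (pY β0 βx βw βxw x 0)
        (βx + βxw) βx := by
  have hm (t : ℝ) : pYgX β0 βx βw βxw γ0 0 t true =
      expit γ0 * pY β0 βx βw βxw t 1 + (1 - expit γ0) * pY β0 βx βw βxw t 0 := by
    simp only [pYgX_true, pW, zero_mul, add_zero]
  have hderiv : HasDerivAt (fun t => pYgX β0 βx βw βxw γ0 0 t true)
      (expit γ0 * (pY β0 βx βw βxw x 1 * (1 - pY β0 βx βw βxw x 1) * (βx + βxw)) +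
        (1 - expit γ0) * (pY β0 βx βw βxw x 0 * (1 - pY β0 βx βw βxw x 0) * βx)) x := by
    simp only [hm]
    refine ((hasDerivAt_pY β0 βx βw βxw x 1).const_mul (expit γ0)).fun_add
      ((hasDerivAt_pY β0 βx βw βxw x 0).const_mul (1 - expit γ0)) |>.congr_deriv ?_
    ring
  obtain ⟨h0, h1⟩ := hm x ▸ mixture_mem_Ioo (Ioo_subset_Icc_self (expit_mem_Ioo γ0))
    (expit_mem_Ioo _) (expit_mem_Ioo _)
  have hlogit : margLogit β0 βx βw βxw γ0 0 =
      fun t => log (pYgX β0 βx βw βxw γ0 0 t true / (1 - pYgX β0 βx βw βxw γ0 0 t true)) := by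
    funext t; rw [margLogit, pYgX_false]
  rw [betaMarg, hlogit, (hderiv.log_div_one_sub h0 h1).deriv, hm, mixtureLogOddsSlope]

/-- No effect reversal when `γx = 0` (i.e. `W ⊥ X`): if moreover `βxw = 0` and `βx ≥ 0`
then `0 ≤ β(x) ≤ βx`; more generally if `βx ≥ 0` and `βxw ≥ 0` then `β(x) ≥ 0`. -/
theorem no_effect_reversal (β0 βx βw βxw γ0 γx : ℝ) (hγ : γx = 0) :
    (βxw = 0 → 0 ≤ βx →
      ∀ x : ℝ, 0 ≤ betaMarg β0 βx βw βxw γ0 γx x ∧ betaMarg β0 βx βw βxw γ0 γx x ≤ βx) ∧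
    (0 ≤ βx → 0 ≤ βxw →
      ∀ x : ℝ, 0 ≤ betaMarg β0 βx βw βxw γ0 γx x) := by
  subst hγ
  have hp := Ioo_subset_Icc_self (expit_mem_Ioo γ0)
  have ha (x w : ℝ) : pY β0 βx βw βxw x w ∈ Ioo 0 1 := expit_mem_Ioo _
  have ha' (x w : ℝ) := Ioo_subset_Icc_self (ha x w)
  refine ⟨fun hxw hx x => ?_, fun hx hxw x => ?_⟩
  · subst hxw
    rw [betaMarg_eq_mixtureLogOddsSlope, add_zero]
    exact ⟨mixtureLogOddsSlope_nonneg hp (ha' x 1) (ha' x 0) hx hx,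
      mixtureLogOddsSlope_le hp (ha x 1) (ha x 0) hx⟩
  · rw [betaMarg_eq_mixtureLogOddsSlope]
    exact mixtureLogOddsSlope_nonneg hp (ha' x 1) (ha' x 0) (add_nonneg hx hxw) hx
end
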